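/- Let G be a finite simple undirected graph and e = {a,b} a bridge of G (deleting e disconnects a from b). Then for every vertex v in the connected component of G containing a (equivalently b), c_{G−e}(v) < c_G(v), where c_H(v) := P(H) − P(H∖{v}). -/

import Mathlib

/-- Total pairwise connectivity: the number of unordered pairs of distinct vertices
joined by a path. -/
noncomputable def pairConn {V : Type*} [Fintype V] (G : SimpleGraph V) : ℕ :=
  {p : Sym2 V | ¬ p.IsDiag ∧
    p ∈ Sym2.fromRel (r := G.Reachable) ⟨fun _ _ h => h.symm⟩}.ncard

/-- Deleting a set of vertices from a simple graph (modelled by isolating them,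
which leaves the pairwise connectivity among the remaining vertices unchanged and
contributes no connected pairs). -/
def SimpleGraph.vdel {V : Type*} (G : SimpleGraph V) (S : Set V) : SimpleGraph V where
  Adj a b := G.Adj a b ∧ a ∉ S ∧ b ∉ S
  symm := ⟨fun a b ⟨h, ha, hb⟩ => ⟨h.symm, hb, ha⟩⟩
  loopless := ⟨fun a ⟨h, _, _⟩ => G.irrefl h⟩

/-- Pairwise connectivity score of a vertex: `c(v) = P(G) - P(G \ {v})`. -/
noncomputable def cscore {V : Type*} [Fintype V] (G : SimpleGraph V) (v : V) : ℕ :=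
  pairConn G - pairConn (G.vdel {v})

/-!
`c_H(v)` is the number of pairs connected in `H` but separated by the removal of `v`. Every pair
counted for `G - e` is counted for `G`: were it still connected in `G ∖ {v}`, the connecting walk
could not use the bridge, since its ends lie on one side of the bridge in `G - e`, so it would
survive in `(G - e) ∖ {v}`. The pair `{v, w}`, with `w` the end of the bridge not reachable from
`v` in `G - e`, is counted for `G` but not for `G - e`.
-/

namespace SimpleGraph

variable {V : Type*}

def connPairs (G : SimpleGraph V) : Set (Sym2 V) :=
  {p : Sym2 V | ¬ p.IsDiag ∧ p ∈ Sym2.fromRel (r := G.Reachable) ⟨fun _ _ h => h.symm⟩}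

theorem pairConn_eq_ncard_connPairs [Fintype V] (G : SimpleGraph V) :
    pairConn G = (connPairs G).ncard := rfl

@[simp]
theorem mk_mem_connPairs {G : SimpleGraph V} {x y : V} :
    s(x, y) ∈ connPairs G ↔ x ≠ y ∧ G.Reachable x y := by
  simp [connPairs]

theorem connPairs_mono {G H : SimpleGraph V} (h : G ≤ H) : connPairs G ⊆ connPairs H := by
  rintro ⟨x, y⟩ hp
  rw [mk_mem_connPairs] at hp ⊢
  exact ⟨hp.1, hp.2.mono h⟩

theorem vdel_le (G : SimpleGraph V) (S : Set V) : G.vdel S ≤ G :=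
  fun _ _ h => h.1

theorem deleteEdges_vdel (G : SimpleGraph V) (E : Set (Sym2 V)) (S : Set V) :
    (G.vdel S).deleteEdges E = (G.deleteEdges E).vdel S := by
  ext
  simp only [deleteEdges_adj, vdel]
  tauto

theorem not_reachable_vdel_singleton (G : SimpleGraph V) {v w : V} (h : v ≠ w) :
    ¬ (G.vdel {v}).Reachable v w := by
  rintro ⟨_ | ⟨hadj, _⟩⟩
  exacts [h rfl, hadj.2.1 rfl]

theorem cscore_eq_ncard_sdiff [Fintype V] (G : SimpleGraph V) (v : V) :
    cscore G v = (connPairs G \ connPairs (G.vdel {v})).ncard := by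
  rw [cscore, pairConn_eq_ncard_connPairs, pairConn_eq_ncard_connPairs,
    Set.ncard_sdiff (connPairs_mono (vdel_le G {v}))]

theorem Reachable.deleteEdges_singleton_or {H : SimpleGraph V} {x y : V} (a b : V)
    (h : H.Reachable x y) :
    (H.deleteEdges {s(a, b)}).Reachable x y ∨
      (H.deleteEdges {s(a, b)}).Reachable x a ∧ (H.deleteEdges {s(a, b)}).Reachable b y ∨
      (H.deleteEdges {s(a, b)}).Reachable x b ∧ (H.deleteEdges {s(a, b)}).Reachable a y := by
  obtain ⟨p⟩ := h
  induction p with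
  | nil => exact .inl .rfl
  | @cons u z w hadj p ih =>
    by_cases he : s(u, z) = s(a, b)
    · rcases Sym2.eq_iff.mp he with ⟨rfl, rfl⟩ | ⟨rfl, rfl⟩
      · rcases ih with h | ⟨-, h⟩ | ⟨-, h⟩
        exacts [.inr (.inl ⟨.rfl, h⟩), .inr (.inl ⟨.rfl, h⟩), .inl h]
      · rcases ih with h | ⟨-, h⟩ | ⟨-, h⟩
        exacts [.inr (.inr ⟨.rfl, h⟩), .inl h, .inr (.inr ⟨.rfl, h⟩)]
    · have huz : (H.deleteEdges {s(a, b)}).Reachable u z :=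
        (deleteEdges_adj.mpr ⟨hadj, he⟩).reachable
      rcases ih with h | ⟨h, h'⟩ | ⟨h, h'⟩
      exacts [.inl (huz.trans h), .inr (.inl ⟨huz.trans h, h'⟩),
        .inr (.inr ⟨huz.trans h, h'⟩)]

/-- If the `H`-walk from `x` to `y` crossed the bridge, `x` and `y` would lie on opposite sides
of it in `G - e`. -/
theorem IsBridge.reachable_deleteEdges_of_le {G H : SimpleGraph V} {a b x y : V}
    (hb : G.IsBridge s(a, b)) (hHG : H ≤ G) (hH : H.Reachable x y)
    (hG : (G.deleteEdges {s(a, b)}).Reachable x y) :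
    (H.deleteEdges {s(a, b)}).Reachable x y := by
  have hle : H.deleteEdges {s(a, b)} ≤ G.deleteEdges {s(a, b)} := deleteEdges_mono hHG
  rcases hH.deleteEdges_singleton_or a b with h | ⟨hxa, hby⟩ | ⟨hxb, hay⟩
  · exact h
  · exact absurd (((hxa.mono hle).symm.trans hG).trans (hby.mono hle).symm) hb
  · exact absurd (((hxb.mono hle).symm.trans hG).trans (hay.mono hle).symm).symm hb

theorem IsBridge.connPairs_sdiff_vdel_subset {G : SimpleGraph V} {a b : V}
    (hb : G.IsBridge s(a, b)) (S : Set V) :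
    connPairs (G.deleteEdges {s(a, b)}) \ connPairs ((G.deleteEdges {s(a, b)}).vdel S) ⊆
      connPairs G \ connPairs (G.vdel S) := by
  rintro ⟨x, y⟩ ⟨hG', hnot⟩
  refine ⟨connPairs_mono (deleteEdges_le _) hG', fun hS => hnot ?_⟩
  rw [mk_mem_connPairs] at hG' hS ⊢
  rw [← deleteEdges_vdel]
  exact ⟨hG'.1, hb.reachable_deleteEdges_of_le (vdel_le G S) hS.2 hG'.2⟩

theorem IsBridge.exists_not_reachable_deleteEdges {G : SimpleGraph V} {a b v : V}
    (hb : G.IsBridge s(a, b)) (hab : G.Adj a b) (hva : G.Reachable v a) :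
    ∃ w, G.Reachable v w ∧ ¬ (G.deleteEdges {s(a, b)}).Reachable v w := by
  by_cases hva' : (G.deleteEdges {s(a, b)}).Reachable v a
  · exact ⟨b, hva.trans hab.reachable, fun hvb => hb (hva'.symm.trans hvb)⟩
  · exact ⟨a, hva, hva'⟩

end SimpleGraph

open SimpleGraph in
theorem cscore_strict_decrease_of_bridge {V : Type*} [Fintype V]
    (G : SimpleGraph V) (a b : V) (hab : G.Adj a b)
    (hbridge : ¬ (G.deleteEdges {s(a, b)}).Reachable a b) :
    ∀ v : V, G.Reachable v a →
      cscore (G.deleteEdges {s(a, b)}) v < cscore G v := by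
  intro v hva
  have hb : G.IsBridge s(a, b) := isBridge_iff.mpr hbridge
  obtain ⟨w, hvw, hnot⟩ := hb.exists_not_reachable_deleteEdges hab hva
  have hne : v ≠ w := fun h => hnot (h ▸ .rfl)
  rw [cscore_eq_ncard_sdiff, cscore_eq_ncard_sdiff]
  refine Set.ncard_lt_ncard ((Set.ssubset_iff_of_subset (hb.connPairs_sdiff_vdel_subset _)).mpr
    ⟨s(v, w), ?_, ?_⟩) (Set.toFinite _)
  · exact ⟨mk_mem_connPairs.mpr ⟨hne, hvw⟩,
      fun h => not_reachable_vdel_singleton G hne (mk_mem_connPairs.mp h).2⟩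
  · exact fun h => hnot (mk_mem_connPairs.mp h.1).2
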